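/- Let n ≥ 1 and let β₁,…,β₉ be permutations of {1,…,2n}, at least one of which is connected. Then the lattice functional F(β) := 4|γ_{n,n}⁻¹β₅| + |γ_{n,n}⁻¹β₄| + |γ_{n,n}⁻¹β₆| + 2(|β₁| + |β₃| + |β₄| + |β₆| + |β₇| + |β₉|) + 3(|β₂| + |β₈|) + Σ_{(i,j)∈E} |β_i⁻¹β_j|, where E = {(1,2),(2,3),(4,5),(5,6),(7,8),(8,9),(1,4),(4,7),(2,5),(5,8),(3,6),(6,9)}, satisfies F(β) ≥ 6(2n − 2) + 2. -/

import Mathlib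

/-!
For a permutation `σ` of a finite set of size `m`, `cycleCount σ` is the number of cycles
(fixed points count as cycles) and `permLen σ = m - cycleCount σ` (the minimal number of
transpositions needed to write `σ`).  We model `{1,…,2n}` as `Fin n ⊕ Fin n`, the first
summand being `{1,…,n}` and the second `{n+1,…,2n}`.  `gammaNN n` is the product of the
two `n`-cycles `(1,2,…,n)` and `(n+1,…,2n)`.
-/

/-- The number of cycles of a permutation, where fixed points count as cycles. -/
noncomputable def cycleCount {α : Type*} [Fintype α] [DecidableEq α]
    (σ : Equiv.Perm α) : ℕ :=
  Multiset.card σ.cycleType + (Fintype.card α - σ.support.card)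

/-- `|σ| = m - #(σ)`, the minimal number of transpositions whose product is `σ`. -/
noncomputable def permLen {α : Type*} [Fintype α] [DecidableEq α]
    (σ : Equiv.Perm α) : ℕ :=
  Fintype.card α - cycleCount σ

/-- `γ_{n,n}`: the product of the two `n`-cycles `(1,…,n)` and `(n+1,…,2n)`. -/
def gammaNN (n : ℕ) : Equiv.Perm (Fin n ⊕ Fin n) :=
  Equiv.sumCongr (finRotate n) (finRotate n)

/-- A permutation of `{1,…,2n}` is connected if some cycle of it contains both an
element of `{1,…,n}` and an element of `{n+1,…,2n}`. -/
def IsConnectedPerm {n : ℕ} (β : Equiv.Perm (Fin n ⊕ Fin n)) : Prop :=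
  ∃ a b : Fin n, β.SameCycle (Sum.inl a) (Sum.inr b)

/-- The lattice functional for the 3×3 grid:
`F(β) = 4|γ_{n,n}⁻¹β₅| + |γ_{n,n}⁻¹β₄| + |γ_{n,n}⁻¹β₆|
  + 2(|β₁| + |β₃| + |β₄| + |β₆| + |β₇| + |β₉|) + 3(|β₂| + |β₈|)
  + Σ_{(i,j)∈E} |βᵢ⁻¹βⱼ|` over the twelve grid edges `E`. -/
noncomputable def latticeF {n : ℕ}
    (b₁ b₂ b₃ b₄ b₅ b₆ b₇ b₈ b₉ : Equiv.Perm (Fin n ⊕ Fin n)) : ℕ :=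
  4 * permLen ((gammaNN n)⁻¹ * b₅) + permLen ((gammaNN n)⁻¹ * b₄)
    + permLen ((gammaNN n)⁻¹ * b₆)
    + 2 * (permLen b₁ + permLen b₃ + permLen b₄ + permLen b₆ + permLen b₇ + permLen b₉)
    + 3 * (permLen b₂ + permLen b₈)
    + (permLen (b₁⁻¹ * b₂) + permLen (b₂⁻¹ * b₃) + permLen (b₄⁻¹ * b₅)
      + permLen (b₅⁻¹ * b₆) + permLen (b₇⁻¹ * b₈) + permLen (b₈⁻¹ * b₉)
      + permLen (b₁⁻¹ * b₄) + permLen (b₄⁻¹ * b₇) + permLen (b₂⁻¹ * b₅)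
      + permLen (b₅⁻¹ * b₈) + permLen (b₃⁻¹ * b₆) + permLen (b₆⁻¹ * b₉))

/-!
Write `d(σ, τ) = |σ⁻¹τ|`. A product of `k` transpositions has at least `m - k` cycles, since its
cycles refine the components of the graph formed by the transpositions; hence `|σ|` is the least
number of transpositions with product `σ`, and `d` is a metric. `F(β)` is a weighted sum of
`d`-lengths in a grid joining `1`, `γ = γ_{n,n}` and the `βᵢ`; it pays for six routes from `1` to
`γ`, each of length at least `d(1, γ) = 2n - 2`, and its spare terms reroute one of them through
any `βᵢ`, so `F(β) ≥ 5(2n - 2) + |βᵢ| + |βᵢ⁻¹γ|`. If `βᵢ` is connected, then `βᵢ` and `βᵢ⁻¹γ`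
generate a transitive group, so the transpositions of minimal factorizations of both form a
connected graph on `2n` points and `|βᵢ| + |βᵢ⁻¹γ| ≥ 2n - 1`; as the sum has the parity of
`|γ| = 2n - 2`, it is at least `2n`.
-/

open Equiv Equiv.Perm Finset

section PermLen

variable {α : Type*} [Fintype α] [DecidableEq α]

theorem two_mul_card_cycleType_le (σ : Perm α) :
    2 * Multiset.card σ.cycleType ≤ #σ.support := by
  rw [← sum_cycleType, mul_comm, ← smul_eq_mul]
  exact Multiset.card_nsmul_le_sum fun _ h => two_le_of_mem_cycleType h

theorem permLen_eq_card_support_sub (σ : Perm α) :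
    permLen σ = #σ.support - Multiset.card σ.cycleType := by
  have := two_mul_card_cycleType_le σ
  have := card_le_univ σ.support
  unfold permLen cycleCount
  omega

@[simp] theorem permLen_one : permLen (1 : Perm α) = 0 := by
  simp [permLen_eq_card_support_sub]

@[simp] theorem permLen_inv (σ : Perm α) : permLen σ⁻¹ = permLen σ := by
  simp [permLen_eq_card_support_sub]

theorem Equiv.Perm.Disjoint.permLen_mul {σ τ : Perm α} (h : σ.Disjoint τ) :
    permLen (σ * τ) = permLen σ + permLen τ := by
  have := two_mul_card_cycleType_le σ
  have := two_mul_card_cycleType_le τ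
  simp only [permLen_eq_card_support_sub, h.cycleType_mul, h.card_support_mul, Multiset.card_add]
  omega

theorem Equiv.Perm.IsCycle.permLen_eq {σ : Perm α} (h : σ.IsCycle) :
    permLen σ = #σ.support - 1 := by
  simp [permLen_eq_card_support_sub, h.cycleType]

theorem sign_eq_neg_one_pow_permLen (σ : Perm α) : sign σ = (-1) ^ permLen σ := by
  have := two_mul_card_cycleType_le σ
  rw [sign_of_cycleType, sum_cycleType, permLen_eq_card_support_sub,
    show #σ.support + Multiset.card σ.cycleType
      = #σ.support - Multiset.card σ.cycleType + 2 * Multiset.card σ.cycleType by omega,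
    pow_add, pow_mul]
  simp

theorem even_permLen_mul_iff (σ τ : Perm α) :
    Even (permLen (σ * τ)) ↔ Even (permLen σ + permLen τ) := by
  simp only [← neg_one_pow_eq_one_iff_even (R := ℤˣ) (by decide), pow_add,
    ← sign_eq_neg_one_pow_permLen, Perm.sign_mul]

theorem permLen_extendDomain {β : Type*} [Fintype β] [DecidableEq β] {p : β → Prop}
    [DecidablePred p] (σ : Perm α) (f : α ≃ Subtype p) :
    permLen (σ.extendDomain f) = permLen σ := by
  rw [permLen_eq_card_support_sub, permLen_eq_card_support_sub, cycleType_extendDomain,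
    card_support_extend_domain]

theorem permLen_sumCongr {β : Type*} [Fintype β] [DecidableEq β] (σ : Perm α) (τ : Perm β) :
    permLen (Perm.sumCongr σ τ) = permLen σ + permLen τ := by
  have hσ : Perm.sumCongr σ (1 : Perm β) = σ.extendDomain (ofInjective _ Sum.inl_injective) := by
    ext (a | b)
    · exact (extendDomain_apply_image σ (ofInjective _ Sum.inl_injective) a).symm
    · simp [extendDomain_apply_not_subtype]
  have hτ : Perm.sumCongr (1 : Perm α) τ = τ.extendDomain (ofInjective _ Sum.inr_injective) := by
    ext (a | b)
    · simp [extendDomain_apply_not_subtype]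
    · exact (extendDomain_apply_image τ (ofInjective _ Sum.inr_injective) b).symm
  have hdisj : (Perm.sumCongr σ (1 : Perm β)).Disjoint (Perm.sumCongr 1 τ) := by
    rintro (a | b) <;> simp
  rw [show Perm.sumCongr σ τ = Perm.sumCongr σ 1 * Perm.sumCongr 1 τ by simp, hdisj.permLen_mul,
    hσ, hτ, permLen_extendDomain, permLen_extendDomain]

end PermLen

theorem SimpleGraph.reachable_apply_of_mem_closure {V : Type*} (G : SimpleGraph V)
    {S : Set (Perm V)} (hS : ∀ σ ∈ S, ∀ x, G.Reachable x (σ x)) {g : Perm V}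
    (hg : g ∈ Subgroup.closure S) (x : V) : G.Reachable x (g x) := by
  induction hg using Subgroup.closure_induction generalizing x with
  | mem σ hσ => exact hS σ hσ x
  | one => rfl
  | mul g h _ _ hg hh => exact (hh x).trans (hg (h x))
  | inv g _ hg => simpa using (hg (g⁻¹ x)).symm

theorem SimpleGraph.card_le_card_edgeSet_add_card_connectedComponent {V : Type*} [Finite V]
    (G : SimpleGraph V) : Nat.card V ≤ Nat.card G.edgeSet + Nat.card G.ConnectedComponent := by
  rcases isEmpty_or_nonempty V with hV | ⟨⟨v⟩⟩
  · simp
  -- Joining `v` to one representative of every other component makes the graph connected.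
  set c₀ := G.connectedComponentMk v
  let H : SimpleGraph V := fromEdgeSet ((fun c => s(v, c.out)) '' {c₀}ᶜ)
  have hreach : ∀ x, (G ⊔ H).Reachable x v := by
    intro x
    by_cases hx : G.connectedComponentMk x = c₀
    · exact (ConnectedComponent.exact hx).mono le_sup_left
    · have hout : G.Reachable x (G.connectedComponentMk x).out :=
        ConnectedComponent.exact (Quot.out_eq _).symm
      have hne : (G.connectedComponentMk x).out ≠ v := fun h =>
        hx ((Quot.out_eq _).symm.trans (congrArg G.connectedComponentMk h))
      have hadj : H.Adj (G.connectedComponentMk x).out v :=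
        (fromEdgeSet_adj _).2 ⟨⟨_, hx, Sym2.eq_swap⟩, hne⟩
      exact (hout.mono le_sup_left).trans (hadj.reachable.mono le_sup_right)
  have hconn : (G ⊔ H).Connected :=
    { preconnected x y := (hreach x).trans (hreach y).symm, nonempty := ⟨v⟩ }
  have hH : Nat.card H.edgeSet + 1 ≤ Nat.card G.ConnectedComponent := by
    have := Set.ncard_add_ncard_compl {c₀}
    rw [Set.ncard_singleton] at this
    have : H.edgeSet.ncard ≤ ({c₀}ᶜ : Set _).ncard := by
      rw [edgeSet_fromEdgeSet]
      exact (Set.ncard_le_ncard Set.sdiff_subset (Set.toFinite _)).trans Set.ncard_image_le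
    rw [Nat.card_coe_set_eq]
    omega
  calc Nat.card V ≤ Nat.card (G ⊔ H).edgeSet + 1 := hconn.card_vert_le_card_edgeSet_add_one
    _ ≤ Nat.card G.edgeSet + Nat.card H.edgeSet + 1 := by
        gcongr
        simpa only [edgeSet_sup, Nat.card_coe_set_eq] using Set.ncard_union_le _ _
    _ ≤ _ := by omega

section SwapGraph

variable {α : Type*}

def swapGraph (l : List (α × α)) : SimpleGraph α :=
  SimpleGraph.fromEdgeSet ((fun p => s(p.1, p.2)) '' {p | p ∈ l})

theorem swapGraph_mono {l₁ l₂ : List (α × α)} (h : l₁ ⊆ l₂) : swapGraph l₁ ≤ swapGraph l₂ :=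
  SimpleGraph.fromEdgeSet_mono (Set.image_mono fun _ hp => h hp)

theorem card_edgeSet_swapGraph_le (l : List (α × α)) :
    Nat.card (swapGraph l).edgeSet ≤ l.length := by
  rw [swapGraph, SimpleGraph.edgeSet_fromEdgeSet, Nat.card_coe_set_eq]
  calc _ ≤ ((fun p : α × α => s(p.1, p.2)) '' {p | p ∈ l}).ncard :=
        Set.ncard_le_ncard Set.sdiff_subset ((l.finite_toSet).image _)
    _ ≤ {p | p ∈ l}.ncard := Set.ncard_image_le l.finite_toSet
    _ ≤ l.length := by
      classical
      rw [← List.coe_toFinset, Set.ncard_coe_finset]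
      exact l.toFinset_card_le

end SwapGraph

section SwapProducts

variable {α : Type*} [DecidableEq α]

def swapProd (l : List (α × α)) : Perm α :=
  (l.map fun p => swap p.1 p.2).prod

theorem swapProd_append (l₁ l₂ : List (α × α)) :
    swapProd (l₁ ++ l₂) = swapProd l₁ * swapProd l₂ := by
  simp [swapProd]

theorem swapProd_zip_tail (l : List α) : swapProd (l.zip l.tail) = l.formPerm := by
  simp only [swapProd, List.formPerm, List.map_zip_eq_zipWith]
  rfl

theorem exists_swapProd_eq [Fintype α] (σ : Perm α) :
    ∃ l : List (α × α), l.length = permLen σ ∧ swapProd l = σ := by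
  induction σ using cycle_induction_on with
  | base_one => exact ⟨[], by simp, rfl⟩
  | base_cycles σ hσ =>
    obtain ⟨x, hx⟩ := hσ.nonempty_support
    refine ⟨(σ.toList x).zip (σ.toList x).tail, ?_, ?_⟩
    · simp [hσ.cycleOf_eq (mem_support.1 hx), hσ.permLen_eq]
    · rw [swapProd_zip_tail, formPerm_toList, hσ.cycleOf_eq (mem_support.1 hx)]
  | induction_disjoint σ τ hd _ hσ hτ =>
    obtain ⟨l₁, hl₁, rfl⟩ := hσ
    obtain ⟨l₂, hl₂, rfl⟩ := hτ
    exact ⟨l₁ ++ l₂, by rw [List.length_append, hd.permLen_mul, hl₁, hl₂], swapProd_append l₁ l₂⟩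

theorem swapGraph_reachable_swap_apply {l : List (α × α)} {p : α × α} (hp : p ∈ l) (x : α) :
    (swapGraph l).Reachable x (swap p.1 p.2 x) := by
  have hadj : (swapGraph l).Reachable p.1 p.2 := by
    by_cases h : p.1 = p.2
    · rw [h]
    · exact SimpleGraph.Adj.reachable ((SimpleGraph.fromEdgeSet_adj _).2 ⟨⟨p, hp, rfl⟩, h⟩)
  rw [swap_apply_def]
  split_ifs with h₁ h₂
  · rwa [h₁]
  · rw [h₂]; exact hadj.symm
  · rfl

theorem swapGraph_reachable_swapProd_apply (l : List (α × α)) (x : α) :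
    (swapGraph l).Reachable x (swapProd l x) := by
  refine (swapGraph l).reachable_apply_of_mem_closure (S := {g | ∃ p ∈ l, swap p.1 p.2 = g})
    ?_ (Subgroup.list_prod_mem _ ?_) x
  · rintro _ ⟨p, hp, rfl⟩ y
    exact swapGraph_reachable_swap_apply hp y
  · simp only [List.mem_map]
    rintro _ ⟨p, hp, rfl⟩
    exact Subgroup.subset_closure ⟨p, hp, rfl⟩

end SwapProducts

section Subadditivity

variable {α : Type*} [Fintype α] [DecidableEq α]

theorem card_connectedComponent_le_cycleCount {G : SimpleGraph α} {σ : Perm α}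
    (h : ∀ x, G.Reachable x (σ x)) : Nat.card G.ConnectedComponent ≤ cycleCount σ := by
  have hsame : ∀ {x y}, σ.SameCycle x y → G.Reachable x y := by
    rintro x _ ⟨i, rfl⟩
    refine G.reachable_apply_of_mem_closure (S := {σ}) ?_
      (zpow_mem (Subgroup.subset_closure (Set.mem_singleton σ)) i) x
    rintro _ rfl
    exact h
  let f : α → Perm α ⊕ α := fun x => if σ x = x then .inr x else .inl (σ.cycleOf x)
  have hf : ∀ x y, f x = f y → G.Reachable x y := by
    intro x y hxy
    by_cases hx : σ x = x <;> by_cases hy : σ y = y <;> simp [f, hx, hy] at hxy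
    · rw [hxy]
    · refine hsame (mem_support_cycleOf_iff.1 ?_).1
      rw [hxy, mem_support_cycleOf_iff]
      exact ⟨.refl σ y, mem_support.2 hy⟩
  have hmem : ∀ x, f x ∈ σ.cycleFactorsFinset.disjSum σ.supportᶜ := by
    intro x
    by_cases hx : σ x = x <;> simp [f, hx, cycleOf_mem_cycleFactorsFinset_iff]
  calc Nat.card G.ConnectedComponent
      ≤ Nat.card (σ.cycleFactorsFinset.disjSum σ.supportᶜ) := by
        refine Nat.card_le_card_of_injective (fun c => ⟨f c.out, hmem _⟩) fun c d hcd => ?_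
        have := SimpleGraph.ConnectedComponent.sound (hf _ _ (congrArg Subtype.val hcd))
        exact (Quot.out_eq c).symm.trans (this.trans (Quot.out_eq d))
    _ = cycleCount σ := by
        simp [cycleCount, card_compl, cycleType_def]

theorem permLen_swapProd_le (l : List (α × α)) : permLen (swapProd l) ≤ l.length := by
  have hV := (swapGraph l).card_le_card_edgeSet_add_card_connectedComponent
  have hE := card_edgeSet_swapGraph_le l
  have hC := card_connectedComponent_le_cycleCount (swapGraph_reachable_swapProd_apply l)
  rw [Nat.card_eq_fintype_card] at hV
  unfold permLen
  omega

theorem permLen_mul_le (σ τ : Perm α) : permLen (σ * τ) ≤ permLen σ + permLen τ := by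
  obtain ⟨l₁, hl₁, rfl⟩ := exists_swapProd_eq σ
  obtain ⟨l₂, hl₂, rfl⟩ := exists_swapProd_eq τ
  simpa [← swapProd_append, hl₁, hl₂] using permLen_swapProd_le (l₁ ++ l₂)

theorem permLen_inv_mul_comm (σ τ : Perm α) : permLen (σ⁻¹ * τ) = permLen (τ⁻¹ * σ) := by
  rw [← permLen_inv, mul_inv_rev, inv_inv]

theorem permLen_inv_mul_le (σ τ ρ : Perm α) :
    permLen (σ⁻¹ * ρ) ≤ permLen (σ⁻¹ * τ) + permLen (τ⁻¹ * ρ) := by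
  simpa [mul_assoc] using permLen_mul_le (σ⁻¹ * τ) (τ⁻¹ * ρ)

theorem card_le_permLen_add_permLen_add_one (σ τ : Perm α)
    [MulAction.IsPretransitive (Subgroup.closure {σ, τ}) α] :
    Fintype.card α ≤ permLen σ + permLen τ + 1 := by
  obtain ⟨l₁, hl₁, rfl⟩ := exists_swapProd_eq σ
  obtain ⟨l₂, hl₂, rfl⟩ := exists_swapProd_eq τ
  set G := swapGraph (l₁ ++ l₂)
  have hgen : ∀ ρ ∈ ({swapProd l₁, swapProd l₂} : Set (Perm α)), ∀ x, G.Reachable x (ρ x) := by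
    rintro ρ (rfl | rfl) x
    · exact (swapGraph_reachable_swapProd_apply l₁ x).mono
        (swapGraph_mono (List.subset_append_left _ _))
    · exact (swapGraph_reachable_swapProd_apply l₂ x).mono
        (swapGraph_mono (List.subset_append_right _ _))
  have hC : Nat.card G.ConnectedComponent ≤ 1 := by
    refine Finite.card_le_one_iff_subsingleton.2 ⟨?_⟩
    rintro ⟨x⟩ ⟨y⟩
    obtain ⟨g, rfl⟩ := MulAction.exists_smul_eq (Subgroup.closure {swapProd l₁, swapProd l₂}) x y
    exact SimpleGraph.ConnectedComponent.sound (G.reachable_apply_of_mem_closure hgen g.2 x)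
  have hV := G.card_le_card_edgeSet_add_card_connectedComponent
  have hE : Nat.card G.edgeSet ≤ l₁.length + l₂.length := by
    simpa using card_edgeSet_swapGraph_le (l₁ ++ l₂)
  rw [Nat.card_eq_fintype_card] at hV
  omega

end Subadditivity

theorem Equiv.Perm.SameCycle.sumCongr_inl {α β : Type*} {σ : Perm α} {x y : α} (τ : Perm β)
    (h : σ.SameCycle x y) : (Perm.sumCongr σ τ).SameCycle (Sum.inl x) (Sum.inl y) := by
  obtain ⟨i, rfl⟩ := h
  exact ⟨i, by rw [show Perm.sumCongr σ τ = sumCongrHom α β (σ, τ) by rfl, ← map_zpow]; simp⟩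

theorem Equiv.Perm.SameCycle.sumCongr_inr {α β : Type*} {τ : Perm β} {x y : β} (σ : Perm α)
    (h : τ.SameCycle x y) : (Perm.sumCongr σ τ).SameCycle (Sum.inr x) (Sum.inr y) := by
  obtain ⟨i, rfl⟩ := h
  exact ⟨i, by rw [show Perm.sumCongr σ τ = sumCongrHom α β (σ, τ) by rfl, ← map_zpow]; simp⟩

theorem sameCycle_finRotate {n : ℕ} (a b : Fin n) : (finRotate n).SameCycle a b := by
  rcases lt_or_ge n 2 with hn | hn
  · rw [Fin.ext (by omega : a.val = b.val)]
  · have hmoved : ∀ c, finRotate n c ≠ c := fun c =>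
      mem_support.1 (by simp [support_finRotate_of_le hn])
    exact (isCycle_finRotate_of_le hn).sameCycle (hmoved a) (hmoved b)

theorem permLen_finRotate (n : ℕ) : permLen (finRotate n) = n - 1 := by
  rcases n with _ | _ | n
  · rfl
  · exact permLen_one
  · simp [permLen_eq_card_support_sub, cycleType_finRotate, support_finRotate]

theorem permLen_gammaNN (n : ℕ) : permLen (gammaNN n) = 2 * n - 2 := by
  rw [gammaNN, ← Perm.sumCongr, permLen_sumCongr, permLen_finRotate]
  omega

theorem isPretransitive_closure_inv_mul_gammaNN {n : ℕ} {b : Perm (Fin n ⊕ Fin n)}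
    (hb : IsConnectedPerm b) :
    MulAction.IsPretransitive (Subgroup.closure {b, b⁻¹ * gammaNN n}) (Fin n ⊕ Fin n) := by
  obtain ⟨a₀, c₀, hab⟩ := hb
  set H := Subgroup.closure {b, b⁻¹ * gammaNN n}
  have hbH : b ∈ H := Subgroup.subset_closure (by simp)
  have hγH : gammaNN n ∈ H := by
    simpa using mul_mem hbH (Subgroup.subset_closure (by simp) : b⁻¹ * gammaNN n ∈ H)
  have hmove : ∀ g ∈ H, ∀ {x y}, g.SameCycle x y → ∃ h : H, h • x = y := by
    rintro g hg x _ ⟨i, rfl⟩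
    exact ⟨⟨g ^ i, zpow_mem hg i⟩, rfl⟩
  refine MulAction.IsPretransitive.of_orbit (x₀ := Sum.inl a₀) ?_
  rintro (a | c)
  · exact hmove _ hγH ((sameCycle_finRotate a₀ a).sumCongr_inl _)
  · obtain ⟨g, hg⟩ := hmove _ hbH hab
    obtain ⟨h, hh⟩ := hmove _ hγH ((sameCycle_finRotate c₀ c).sumCongr_inr _)
    exact ⟨h * g, by rw [mul_smul, hg, hh]⟩

theorem two_mul_le_permLen_add_permLen_inv_mul_gammaNN {n : ℕ} {b : Perm (Fin n ⊕ Fin n)}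
    (hb : IsConnectedPerm b) : 2 * n ≤ permLen b + permLen (b⁻¹ * gammaNN n) := by
  have := isPretransitive_closure_inv_mul_gammaNN hb
  have hcard := card_le_permLen_add_permLen_add_one b (b⁻¹ * gammaNN n)
  obtain ⟨k, hk⟩ : Even (permLen b + permLen (b⁻¹ * gammaNN n)) := by
    rw [← even_permLen_mul_iff, mul_inv_cancel_left, permLen_gammaNN]
    exact ⟨n - 1, by omega⟩
  simp only [Fintype.card_sum, Fintype.card_fin] at hcard
  omega

section Grid

variable {P : Type*}

def gridF (d : P → P → ℕ) (e g b₁ b₂ b₃ b₄ b₅ b₆ b₇ b₈ b₉ : P) : ℕ :=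
  4 * d g b₅ + d g b₄ + d g b₆
    + 2 * (d e b₁ + d e b₃ + d e b₄ + d e b₆ + d e b₇ + d e b₉)
    + 3 * (d e b₂ + d e b₈)
    + (d b₁ b₂ + d b₂ b₃ + d b₄ b₅ + d b₅ b₆ + d b₇ b₈ + d b₈ b₉
      + d b₁ b₄ + d b₄ b₇ + d b₂ b₅ + d b₅ b₈ + d b₃ b₆ + d b₆ b₉)

theorem le_gridF_of_mem {d : P → P → ℕ} (hsymm : ∀ x y, d x y = d y x)
    (htri : ∀ x y z, d x z ≤ d x y + d y z) {e g b₁ b₂ b₃ b₄ b₅ b₆ b₇ b₈ b₉ x : P}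
    (hx : x ∈ [b₁, b₂, b₃, b₄, b₅, b₆, b₇, b₈, b₉]) :
    5 * d e g + (d e x + d x g) ≤ gridF d e g b₁ b₂ b₃ b₄ b₅ b₆ b₇ b₈ b₉ := by
  -- `gridF` pays for the six routes `e b₁ b₂ b₅ g`, `e b₁ b₄ b₅ g`, `e b₃ b₆ b₅ g`,
  -- `e b₇ b₈ b₅ g`, `e b₇ b₄ g`, `e b₉ b₆ g`, and for each `x` its spare terms reroute one of
  -- them through `x`; below are the triangle inequalities along these routes.
  have := htri e b₁ g; have := htri e b₃ g; have := htri e b₇ g; have := htri e b₉ g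
  have := htri b₁ b₂ g; have := htri b₂ b₅ g; have := htri b₁ b₄ g; have := htri b₄ b₅ g
  have := htri b₃ b₆ g; have := htri b₆ b₅ g; have := htri b₇ b₈ g; have := htri b₈ b₅ g
  have := htri b₇ b₄ g; have := htri b₉ b₆ g; have := htri e b₂ b₅
  have := hsymm b₄ g; have := hsymm b₅ g; have := hsymm b₆ g
  have := hsymm b₆ b₅; have := hsymm b₈ b₅; have := hsymm b₇ b₄; have := hsymm b₉ b₆
  simp only [List.mem_cons, List.not_mem_nil, or_false] at hx
  unfold gridF
  rcases hx with rfl | rfl | rfl | rfl | rfl | rfl | rfl | rfl | rfl <;> linarith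

end Grid

theorem latticeF_eq_gridF {n : ℕ} (b₁ b₂ b₃ b₄ b₅ b₆ b₇ b₈ b₉ : Perm (Fin n ⊕ Fin n)) :
    latticeF b₁ b₂ b₃ b₄ b₅ b₆ b₇ b₈ b₉
      = gridF (fun σ τ => permLen (σ⁻¹ * τ)) 1 (gammaNN n) b₁ b₂ b₃ b₄ b₅ b₆ b₇ b₈ b₉ := by
  simp only [latticeF, gridF, inv_one, one_mul]

theorem latticeF_connected_ge (n : ℕ) (hn : 1 ≤ n)
    (b₁ b₂ b₃ b₄ b₅ b₆ b₇ b₈ b₉ : Equiv.Perm (Fin n ⊕ Fin n))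
    (hconn : IsConnectedPerm b₁ ∨ IsConnectedPerm b₂ ∨ IsConnectedPerm b₃ ∨
      IsConnectedPerm b₄ ∨ IsConnectedPerm b₅ ∨ IsConnectedPerm b₆ ∨
      IsConnectedPerm b₇ ∨ IsConnectedPerm b₈ ∨ IsConnectedPerm b₉) :
    6 * (2 * n - 2) + 2 ≤ latticeF b₁ b₂ b₃ b₄ b₅ b₆ b₇ b₈ b₉ := by
  obtain ⟨x, hx, hxconn⟩ :
      ∃ x ∈ [b₁, b₂, b₃, b₄, b₅, b₆, b₇, b₈, b₉], IsConnectedPerm x := by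
    simpa using hconn
  have hgrid := le_gridF_of_mem (e := 1) (g := gammaNN n) permLen_inv_mul_comm permLen_inv_mul_le hx
  simp only [inv_one, one_mul, permLen_gammaNN] at hgrid
  have hlen := two_mul_le_permLen_add_permLen_inv_mul_gammaNN hxconn
  rw [latticeF_eq_gridF]
  omega
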